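/- Let G(X,Y) be a balanced bipartite graph with perfect matching M = {x_i y_i : 1 ≤ i ≤ n} and let M_0 ⊆ M satisfy δ(M_0) ≥ (3n+1)/4. Then G contains ⌊|M_0|/2⌋ pairwise vertex-disjoint feasible cycles C_1, …, C_{⌊|M_0|/2⌋} with l_{M_0}(C_i) = 2 for each i. -/

import Mathlib

/-- `e(S, T)`: the number of edges of `G` with one end in `S` and the other in `T`. -/
noncomputable def eBtw {V : Type*} (G : SimpleGraph V) (S T : Set V) : ℕ :=
  {e : Sym2 V | e ∈ G.edgeSet ∧ ∃ a b, e = s(a, b) ∧ a ∈ S ∧ b ∈ T}.ncard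

/-- The set of vertices `{xᵢ, yᵢ : i ∈ F}` corresponding to a set `F` of matching
indices; here `Sum.inl i` plays the role of `xᵢ ∈ X` and `Sum.inr i` of `yᵢ ∈ Y`. -/
def iVerts {α : Type*} (F : Set α) : Set (α ⊕ α) :=
  {w | ∃ i ∈ F, w = Sum.inl i ∨ w = Sum.inr i}

/-- An `M`-alternating cycle `x_{i₁} y_{i₁} x_{i₂} y_{i₂} ⋯ x_{i_r} y_{i_r} x_{i₁}`
(where `M = {xᵢyᵢ}` is the perfect matching), encoded by its list of matching
indices `i₁, …, i_r`: consecutive (cyclically) indices are joined by the non-matching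
edges `y_{i_j} x_{i_{j+1}}`.  Such a cycle has `2 * l.length` edges, `l.length` of
which are matching edges. -/
def AltCycle {α : Type*} (G : SimpleGraph (α ⊕ α)) (l : List α) : Prop :=
  2 ≤ l.length ∧ l.Nodup ∧
    ∀ i : Fin l.length,
      G.Adj (Sum.inr (l.get i))
        (Sum.inl (l.get ⟨((i : ℕ) + 1) % l.length, Nat.mod_lt _ i.pos⟩))

/-- An `M`-alternating path `x_{i₁} y_{i₁} ⋯ x_{i_r} y_{i_r}` beginning and ending
with matching edges, encoded by its list of matching indices. -/
def AltPath {α : Type*} (G : SimpleGraph (α ⊕ α)) (l : List α) : Prop :=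
  l ≠ [] ∧ l.Nodup ∧ l.Chain' (fun a b => G.Adj (Sum.inr a) (Sum.inl b))

/-- A feasible path: an `M`-alternating path `x_{i₁} y_{i₁} ⋯ x_{i_r} y_{i_r}` whose
end-vertices `x_{i₁}` and `y_{i_r}` belong to `V(M₀)`, where `S` is the index set of
`M₀ ⊆ M`. -/
def FeasPath {α : Type*} [DecidableEq α] (G : SimpleGraph (α ⊕ α)) (S : Finset α)
    (l : List α) : Prop :=
  AltPath G l ∧ ∀ h : l ≠ [], l.head h ∈ S ∧ l.getLast h ∈ S

/-!
Contract every matching edge `xᵢyᵢ` to its index `i`: the `M`-alternating cycles become the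
directed cycles of the digraph `i → j ⟺ yᵢxⱼ ∈ E(G)`, and the degree condition says that every
`i ∈ S` misses fewer than `n / 4` vertices as out-neighbours and as in-neighbours.

Take a maximum matching `N` of `S` by directed 2-cycles; its pairs are `|N|` of the cycles. Two
unmatched vertices `a, b` have at most `2|N|` mutual neighbours in `S` between them (otherwise the
matching could be enlarged), so they have many non-neighbours in `S`. As they miss few vertices
overall, at least `|U| - 1` vertices `w ∉ S` lie on a path `a → w → b`, where `U` is the set of
unmatched vertices, and at least `|U| + 1` if there is no arc between `a` and `b`. This is enough
to pair up `U` greedily, closing each pair into a cycle of length at most four whose other vertices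
are fresh vertices outside `S`.
-/

open Finset

lemma Finset.exists_ne_of_two_lt_card_add_card {α : Type*} [DecidableEq α] {A B e : Finset α}
    (hA : A ⊆ e) (hB : B ⊆ e) (he : #e = 2) (h : 2 < #A + #B) : ∃ c ∈ A, ∃ d ∈ B, c ≠ d := by
  by_contra! heq
  have hA₁ : ∀ d ∈ B, #A ≤ 1 := fun d hd =>
    card_le_one.2 fun x hx y hy => (heq x hx d hd).trans (heq y hy d hd).symm
  have hB₁ : ∀ c ∈ A, #B ≤ 1 := fun c hc =>
    card_le_one.2 fun x hx y hy => (heq c hc x hx).symm.trans (heq c hc y hy)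
  have := card_le_card hA
  have := card_le_card hB
  rcases A.eq_empty_or_nonempty with rfl | ⟨c, hc⟩
  · simp only [card_empty] at h; omega
  rcases B.eq_empty_or_nonempty with rfl | ⟨d, hd⟩
  · simp only [card_empty] at h; omega
  have := hA₁ d hd
  have := hB₁ c hc
  omega

lemma Finset.inter_eq_inter_of_subset_union {α : Type*} [DecidableEq α] {s U U' F : Finset α}
    (hs : s ⊆ U' ∪ F) (hU' : U' ⊆ U) (hUF : Disjoint U F) : s ∩ U = s ∩ U' := by
  ext x
  simp only [mem_inter]
  refine ⟨fun ⟨hx, hxU⟩ => ⟨hx, ?_⟩, fun ⟨hx, hxU'⟩ => ⟨hx, hU' hxU'⟩⟩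
  exact (mem_union.1 (hs hx)).resolve_right (disjoint_left.1 hUF hxU)

section DirCycle

variable {α : Type*}

/-- Contracting each matching edge `xᵢyᵢ` to the index `i` turns the `M`-alternating cycles of `G`
into the directed cycles of `fun i j => G.Adj (Sum.inr i) (Sum.inl j)`: `AltCycle G` is this
definition for that relation. -/
def IsDirCycle (R : α → α → Prop) (l : List α) : Prop :=
  2 ≤ l.length ∧ l.Nodup ∧
    ∀ i : Fin l.length, R (l.get i) (l.get ⟨((i : ℕ) + 1) % l.length, Nat.mod_lt _ i.pos⟩)

variable {R : α → α → Prop}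

lemma isDirCycle_of_pairwise {l : List α} (hlen : 2 ≤ l.length) (hl : l.Nodup)
    (hR : ∀ a ∈ l, ∀ b ∈ l, a ≠ b → R a b) : IsDirCycle R l := by
  refine ⟨hlen, hl, fun i => hR _ (l.get_mem i) _ (l.get_mem _) ?_⟩
  rw [Ne, hl.get_inj_iff, Fin.ext_iff]
  intro h
  change (i : ℕ) = ((i : ℕ) + 1) % l.length at h
  rcases Nat.lt_or_ge ((i : ℕ) + 1) l.length with hi | hi
  · rw [Nat.mod_eq_of_lt hi] at h; omega
  · rw [show (i : ℕ) + 1 = l.length by omega, Nat.mod_self] at h; omega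

lemma isDirCycle_triple {a b w : α} (hab : a ≠ b) (haw : a ≠ w) (hbw : b ≠ w) (h₁ : R a b)
    (h₂ : R b w) (h₃ : R w a) : IsDirCycle R [a, b, w] := by
  refine ⟨by simp, by simp [hab, haw, hbw], fun i => ?_⟩
  fin_cases i <;> simpa

lemma isDirCycle_quad {a w b w' : α} (hab : a ≠ b) (haw : a ≠ w) (haw' : a ≠ w') (hbw : b ≠ w)
    (hbw' : b ≠ w') (hww' : w ≠ w') (h₁ : R a w) (h₂ : R w b) (h₃ : R b w') (h₄ : R w' a) :
    IsDirCycle R [a, w, b, w'] := by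
  refine ⟨by simp, by simp [hab, haw, haw', hbw.symm, hbw', hww'], fun i => ?_⟩
  fin_cases i <;> simpa

end DirCycle

section MutualMatching

variable {α : Type*}

structure IsMutualMatching (R : α → α → Prop) (S : Finset α) (M : Finset (Finset α)) :
    Prop where
  card_eq_two : ∀ e ∈ M, #e = 2
  subset : ∀ e ∈ M, e ⊆ S
  pairwise : ∀ e ∈ M, (e : Set α).Pairwise R
  pairwiseDisjoint : (M : Set (Finset α)).PairwiseDisjoint id

variable {R : α → α → Prop} {S : Finset α} {M : Finset (Finset α)}

namespace IsMutualMatching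

lemma mono {M' : Finset (Finset α)} (hM : IsMutualMatching R S M) (h : M' ⊆ M) :
    IsMutualMatching R S M' :=
  ⟨fun e he => hM.card_eq_two e (h he), fun e he => hM.subset e (h he),
    fun e he => hM.pairwise e (h he), hM.pairwiseDisjoint.subset (by simpa using h)⟩

variable [DecidableEq α]

lemma biUnion_subset (hM : IsMutualMatching R S M) : M.biUnion id ⊆ S :=
  Finset.biUnion_subset.2 hM.subset

lemma card_biUnion (hM : IsMutualMatching R S M) : #(M.biUnion id) = 2 * #M := by
  rw [Finset.card_biUnion hM.pairwiseDisjoint]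
  simp only [id]
  rw [sum_congr rfl hM.card_eq_two, sum_const, smul_eq_mul, mul_comm]

lemma notMem_biUnion_erase (hM : IsMutualMatching R S M) {e : Finset α} (he : e ∈ M) {x : α}
    (hx : x ∈ e) : x ∉ (M.erase e).biUnion id := by
  simp only [mem_biUnion, mem_erase, id]
  rintro ⟨e', ⟨hne, he'⟩, hxe'⟩
  exact disjoint_left.1 (hM.pairwiseDisjoint he' he hne) hxe' hx

lemma insert_pair (hM : IsMutualMatching R S M) {a b : α} (hab : a ≠ b) (ha : a ∈ S)
    (hb : b ∈ S) (hRab : R a b) (hRba : R b a) (haM : a ∉ M.biUnion id)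
    (hbM : b ∉ M.biUnion id) :
    IsMutualMatching R S (insert {a, b} M) ∧ #(insert {a, b} M) = #M + 1 := by
  have hdisj : ∀ e ∈ M, Disjoint {a, b} e := fun e he => by
    simp only [disjoint_insert_left, disjoint_singleton_left]
    exact ⟨fun h => haM (mem_biUnion.2 ⟨e, he, h⟩), fun h => hbM (mem_biUnion.2 ⟨e, he, h⟩)⟩
  have hnotin : ({a, b} : Finset α) ∉ M := fun h =>
    haM (mem_biUnion.2 ⟨_, h, mem_insert_self a {b}⟩)
  refine ⟨⟨?_, ?_, ?_, ?_⟩, card_insert_of_notMem hnotin⟩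
  · simpa [forall_mem_insert, card_pair hab] using hM.card_eq_two
  · simpa [forall_mem_insert, insert_subset_iff, ha, hb] using hM.subset
  · simpa [forall_mem_insert, coe_pair, Set.pairwise_pair, hRab, hRba] using hM.pairwise
  · rw [coe_insert]
    exact hM.pairwiseDisjoint.insert fun e he _ => hdisj e he

lemma exists_isDirCycles (hM : IsMutualMatching R S M) :
    ∃ L : List (List α), L.length = #M ∧ L.Pairwise List.Disjoint ∧
      ∀ l ∈ L, IsDirCycle R l ∧ l.toFinset ∈ M := by
  refine ⟨M.toList.map toList, by simp, ?_, ?_⟩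
  · refine List.pairwise_map.2 ((nodup_toList M).pairwise_of_forall_ne fun e he e' he' hne => ?_)
    rw [← List.disjoint_toFinset_iff_disjoint, toList_toFinset, toList_toFinset]
    exact hM.pairwiseDisjoint (mem_toList.1 he) (mem_toList.1 he') hne
  · simp only [List.mem_map, mem_toList]
    rintro _ ⟨e, he, rfl⟩
    refine ⟨isDirCycle_of_pairwise (by simp [hM.card_eq_two e he]) (nodup_toList e)
      fun x hx y hy hxy => hM.pairwise e he (mem_toList.1 hx) (mem_toList.1 hy) hxy, ?_⟩
    rwa [toList_toFinset]

end IsMutualMatching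

lemma exists_isMutualMatching_forall_card_le (R : α → α → Prop) (S : Finset α) :
    ∃ M, IsMutualMatching R S M ∧ ∀ M', IsMutualMatching R S M' → #M' ≤ #M := by
  classical
  obtain ⟨M, hM, hmax⟩ := (S.powerset.powerset.filter (IsMutualMatching R S)).exists_max_image
    card ⟨∅, mem_filter.2 ⟨by simp, ⟨by simp, by simp, by simp, by simp⟩⟩⟩
  refine ⟨M, (mem_filter.1 hM).2, fun M' hM' => hmax M' ?_⟩
  simpa [mem_filter, hM', subset_iff] using fun e he => hM'.subset e he

end MutualMatching

section MutualNbrs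

variable {α : Type*} [DecidableEq α] (R : α → α → Prop) [DecidableRel R] (S : Finset α)

def mutualNbrs (a : α) : Finset α := {c ∈ S | c ≠ a ∧ R a c ∧ R c a}

lemma card_add_card_filter_le_card_mutualNbrs (a : α) :
    #S + #{c ∈ S | ¬R a c ∧ ¬R c a} ≤
      #(mutualNbrs R S a) + #{c ∈ S | ¬R a c} + #{c ∈ S | ¬R c a} + 1 := by
  have hcover : S ⊆ insert a (mutualNbrs R S a ∪ ({c ∈ S | ¬R a c} ∪ {c ∈ S | ¬R c a})) := by
    intro c hc
    simp only [mutualNbrs, mem_insert, mem_union, mem_filter]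
    tauto
  have := card_le_card hcover
  have := card_insert_le a (mutualNbrs R S a ∪ ({c ∈ S | ¬R a c} ∪ {c ∈ S | ¬R c a}))
  have := card_union_le (mutualNbrs R S a) ({c ∈ S | ¬R a c} ∪ {c ∈ S | ¬R c a})
  have := card_union_add_card_inter {c ∈ S | ¬R a c} {c ∈ S | ¬R c a}
  rw [← filter_and] at this
  omega

variable {R S} {M : Finset (Finset α)}

lemma mutualNbrs_subset_biUnion (hM : IsMutualMatching R S M)
    (hmax : ∀ M', IsMutualMatching R S M' → #M' ≤ #M) {a : α} (ha : a ∈ S)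
    (haM : a ∉ M.biUnion id) : mutualNbrs R S a ⊆ M.biUnion id := by
  intro c hc
  by_contra hcM
  obtain ⟨hcS, hca, hac, hca'⟩ : c ∈ S ∧ c ≠ a ∧ R a c ∧ R c a := by simpa [mutualNbrs] using hc
  have hM' := hM.insert_pair (Ne.symm hca) ha hcS hac hca' haM hcM
  have := hmax _ hM'.1
  omega

/-- Otherwise replacing the pair `e` by `{a, c}` and `{b, d}` would enlarge the matching. -/
lemma notMem_mutualNbrs_of_mem_mutualNbrs (hM : IsMutualMatching R S M)
    (hmax : ∀ M', IsMutualMatching R S M' → #M' ≤ #M) {a b : α} (hab : a ≠ b) (ha : a ∈ S)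
    (hb : b ∈ S) (haM : a ∉ M.biUnion id) (hbM : b ∉ M.biUnion id) {e : Finset α} (he : e ∈ M)
    {c d : α} (hc : c ∈ e) (hd : d ∈ e) (hcd : c ≠ d) (hca : c ∈ mutualNbrs R S a) :
    d ∉ mutualNbrs R S b := by
  intro hdb
  obtain ⟨hcS, hca, hac, hca'⟩ : c ∈ S ∧ c ≠ a ∧ R a c ∧ R c a := by simpa [mutualNbrs] using hca
  obtain ⟨hdS, hdb, hbd, hdb'⟩ : d ∈ S ∧ d ≠ b ∧ R b d ∧ R d b := by simpa [mutualNbrs] using hdb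
  have hcM : c ∈ M.biUnion id := mem_biUnion.2 ⟨e, he, hc⟩
  have hdM : d ∈ M.biUnion id := mem_biUnion.2 ⟨e, he, hd⟩
  have herase := hM.mono (erase_subset e M)
  have hsub : (M.erase e).biUnion id ⊆ M.biUnion id := biUnion_subset_biUnion_of_subset_left _
    (erase_subset e M)
  obtain ⟨hM₁, hcard₁⟩ := herase.insert_pair (Ne.symm hdb) hb hdS hbd hdb' (fun h => hbM (hsub h))
    (hM.notMem_biUnion_erase he hd)
  obtain ⟨hM₂, hcard₂⟩ := hM₁.insert_pair (Ne.symm hca) ha hcS hac hca'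
    (by
      simp only [biUnion_insert, id, mem_union, mem_insert, mem_singleton, not_or]
      exact ⟨⟨hab, fun h => haM (h ▸ hdM)⟩, fun h => haM (hsub h)⟩)
    (by
      simp only [biUnion_insert, id, mem_union, mem_insert, mem_singleton, not_or]
      exact ⟨⟨fun h => hbM (h ▸ hcM), hcd⟩, hM.notMem_biUnion_erase he hc⟩)
  have := hmax _ hM₂
  have := card_erase_add_one he
  omega

lemma card_mutualNbrs_add_card_mutualNbrs_le (hM : IsMutualMatching R S M)
    (hmax : ∀ M', IsMutualMatching R S M' → #M' ≤ #M) {a b : α} (hab : a ≠ b) (ha : a ∈ S)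
    (hb : b ∈ S) (haM : a ∉ M.biUnion id) (hbM : b ∉ M.biUnion id) :
    #(mutualNbrs R S a) + #(mutualNbrs R S b) ≤ 2 * #M := by
  have hpair : ∀ e ∈ M, #(mutualNbrs R S a ∩ e) + #(mutualNbrs R S b ∩ e) ≤ 2 := by
    intro e he
    by_contra! h
    obtain ⟨c, hc, d, hd, hcd⟩ := Finset.exists_ne_of_two_lt_card_add_card inter_subset_right
      inter_subset_right (hM.card_eq_two e he) h
    exact notMem_mutualNbrs_of_mem_mutualNbrs hM hmax hab ha hb haM hbM he
      (mem_inter.1 hc).2 (mem_inter.1 hd).2 hcd (mem_inter.1 hc).1 (mem_inter.1 hd).1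
  have hsplit : ∀ x ∈ S, x ∉ M.biUnion id →
      #(mutualNbrs R S x) ≤ ∑ e ∈ M, #(mutualNbrs R S x ∩ e) := fun x hx hxM => by
    calc #(mutualNbrs R S x) = #(mutualNbrs R S x ∩ M.biUnion id) := by
          rw [inter_eq_left.2 (mutualNbrs_subset_biUnion hM hmax hx hxM)]
      _ = #(M.biUnion fun e => mutualNbrs R S x ∩ e) := by rw [inter_biUnion]; rfl
      _ ≤ _ := card_biUnion_le
  calc #(mutualNbrs R S a) + #(mutualNbrs R S b)
      ≤ ∑ e ∈ M, (#(mutualNbrs R S a ∩ e) + #(mutualNbrs R S b ∩ e)) := by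
        rw [sum_add_distrib]; exact add_le_add (hsplit a ha haM) (hsplit b hb hbM)
    _ ≤ ∑ _e ∈ M, 2 := sum_le_sum hpair
    _ = 2 * #M := by rw [sum_const, smul_eq_mul, mul_comm]

end MutualNbrs

section Connectors

variable {α : Type*} [DecidableEq α] {R : α → α → Prop} [DecidableRel R]

variable (R) in
def connectors (F : Finset α) (a b : α) : Finset α := {w ∈ F | R a w ∧ R w b}

lemma card_connectors_le_card_connectors_sdiff_add (F T : Finset α) (a b : α) :
    #(connectors R F a b) ≤ #(connectors R (F \ T) a b) + #T := by
  refine (card_le_card fun w hw => ?_).trans (card_union_le _ _)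
  by_cases hwT : w ∈ T
  · exact mem_union_right _ hwT
  · simp only [connectors, mem_filter] at hw
    exact mem_union_left _ (mem_filter.2 ⟨mem_sdiff.2 ⟨hw.1, hwT⟩, hw.2⟩)

lemma exists_isDirCycle_triple {F : Finset α} {a b w : α} (hab : a ≠ b) (haF : a ∉ F)
    (hbF : b ∉ F) (hR : R a b) (hw : w ∈ connectors R F b a) :
    ∃ l T, IsDirCycle R l ∧ T ⊆ F ∧ #T ≤ 2 ∧ l.toFinset = {a, b} ∪ T := by
  obtain ⟨hwF, hbw, hwa⟩ := mem_filter.1 hw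
  refine ⟨[a, b, w], {w}, isDirCycle_triple hab (ne_of_mem_of_not_mem hwF haF).symm
    (ne_of_mem_of_not_mem hwF hbF).symm hR hbw hwa, singleton_subset_iff.2 hwF, by simp, ?_⟩
  ext x
  simp

/-- The cycle is `a → b → w → a`, `b → a → w → b` or `a → w → b → w' → a`. -/
lemma exists_isDirCycle_through {F : Finset α} {a b : α} (hab : a ≠ b) (haF : a ∉ F)
    (hbF : b ∉ F) (hab' : (connectors R F a b).Nonempty) (hba' : (connectors R F b a).Nonempty)
    (hnon : ¬R a b → ¬R b a → 1 < #(connectors R F a b)) :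
    ∃ l T, IsDirCycle R l ∧ T ⊆ F ∧ #T ≤ 2 ∧ l.toFinset = {a, b} ∪ T := by
  by_cases hRab : R a b
  · exact exists_isDirCycle_triple hab haF hbF hRab hba'.choose_spec
  by_cases hRba : R b a
  · rw [pair_comm]
    exact exists_isDirCycle_triple hab.symm hbF haF hRba hab'.choose_spec
  obtain ⟨w', hw'⟩ := hba'
  obtain ⟨w, hw, hww'⟩ := exists_mem_ne (hnon hRab hRba) w'
  obtain ⟨hwF, haw, hwb⟩ := mem_filter.1 hw
  obtain ⟨hw'F, hbw', hw'a⟩ := mem_filter.1 hw'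
  refine ⟨[a, w, b, w'], {w, w'}, isDirCycle_quad hab (ne_of_mem_of_not_mem hwF haF).symm
    (ne_of_mem_of_not_mem hw'F haF).symm (ne_of_mem_of_not_mem hwF hbF).symm
    (ne_of_mem_of_not_mem hw'F hbF).symm hww' haw hwb hbw' hw'a,
    insert_subset hwF (singleton_subset_iff.2 hw'F), card_le_two, ?_⟩
  ext x
  simp only [List.toFinset_cons, List.toFinset_nil, insert_empty_eq, mem_insert, mem_singleton,
    mem_union]
  tauto

end Connectors

section GreedyCycles

variable {α : Type*} [DecidableEq α] {R : α → α → Prop}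

def IsCyclePacking (R : α → α → Prop) (U F : Finset α) (L : List (List α)) : Prop :=
  L.Pairwise List.Disjoint ∧
    ∀ l ∈ L, IsDirCycle R l ∧ l.toFinset ⊆ U ∪ F ∧ #(l.toFinset ∩ U) = 2

lemma IsCyclePacking.cons {U F T : Finset α} {a b : α} {l : List α} {L : List (List α)}
    (hUF : Disjoint U F) (hab : a ≠ b) (habU : {a, b} ⊆ U) (hTF : T ⊆ F) (hl : IsDirCycle R l)
    (hlT : l.toFinset = {a, b} ∪ T) (hL : IsCyclePacking R (U \ {a, b}) (F \ T) L) :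
    IsCyclePacking R U F (l :: L) := by
  obtain ⟨hpw, hL⟩ := hL
  have hTU : Disjoint T U := disjoint_of_subset_left hTF hUF.symm
  refine ⟨List.pairwise_cons.2 ⟨fun l' hl' => ?_, hpw⟩, fun l' hl' => ?_⟩
  · rw [← List.disjoint_toFinset_iff_disjoint, hlT]
    refine disjoint_of_subset_right (hL l' hl').2.1 ?_
    simp only [disjoint_union_left, disjoint_union_right]
    exact ⟨⟨disjoint_sdiff, hTU.mono_right sdiff_subset⟩,
      disjoint_of_subset_left habU (hUF.mono_right sdiff_subset), disjoint_sdiff⟩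
  rcases List.mem_cons.1 hl' with rfl | hl'
  · refine ⟨hl, hlT ▸ union_subset_union habU hTF, ?_⟩
    rw [hlT, union_inter_distrib_right, inter_eq_left.2 habU,
      disjoint_iff_inter_eq_empty.1 hTU, union_empty, card_pair hab]
  · obtain ⟨hcyc, hsub, hcard⟩ := hL l' hl'
    refine ⟨hcyc, hsub.trans (union_subset_union sdiff_subset sdiff_subset), ?_⟩
    rwa [inter_eq_inter_of_subset_union hsub sdiff_subset (hUF.mono_right sdiff_subset)]

variable [DecidableRel R]

/-- Pair up `U` greedily: closing a pair into a cycle uses at most two vertices of `F`, so every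
connector count drops by at most two while `#U` drops by exactly two. -/
theorem exists_isCyclePacking_of_connectors {U F : Finset α} (hUF : Disjoint U F)
    (h₁ : ∀ a ∈ U, ∀ b ∈ U, a ≠ b → #U ≤ #(connectors R F a b) + 1)
    (h₂ : ∀ a ∈ U, ∀ b ∈ U, a ≠ b → ¬R a b → ¬R b a → #U < #(connectors R F a b)) :
    ∃ L : List (List α), L.length = #U / 2 ∧ IsCyclePacking R U F L := by
  induction U using Finset.strongInduction generalizing F with
  | H U ih =>
  rcases le_or_gt #U 1 with hU | hU
  · exact ⟨[], by simp; omega, List.Pairwise.nil, by simp⟩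
  obtain ⟨a, ha, b, hb, hab⟩ := one_lt_card.1 hU
  obtain ⟨l, T, hl, hTF, hT, hlT⟩ := exists_isDirCycle_through (R := R) hab
    (disjoint_left.1 hUF ha) (disjoint_left.1 hUF hb)
    (card_pos.1 (by have := h₁ a ha b hb hab; omega))
    (card_pos.1 (by have := h₁ b hb a ha hab.symm; omega))
    (fun h h' => by have := h₂ a ha b hb hab h h'; omega)
  have habU : {a, b} ⊆ U := insert_subset ha (singleton_subset_iff.2 hb)
  have hU' : #(U \ {a, b}) + 2 = #U := by
    rw [card_sdiff_of_subset habU, card_pair hab]; omega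
  have hshrink : ∀ x y, #(connectors R F x y) ≤ #(connectors R (F \ T) x y) + 2 := fun x y =>
    (card_connectors_le_card_connectors_sdiff_add F T x y).trans (by omega)
  obtain ⟨L, hlen, hL⟩ := ih (U \ {a, b}) (sdiff_ssubset habU (insert_nonempty a {b}))
    (F := F \ T) (hUF.mono sdiff_subset sdiff_subset)
    (fun x hx y hy hxy => by
      have := h₁ x (sdiff_subset hx) y (sdiff_subset hy) hxy
      have := hshrink x y
      omega)
    (fun x hx y hy hxy h h' => by
      have := h₂ x (sdiff_subset hx) y (sdiff_subset hy) hxy h h'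
      have := hshrink x y
      omega)
  exact ⟨l :: L, by simp only [List.length_cons]; omega, hL.cons hUF hab habU hTF hl hlT⟩

end GreedyCycles

section Dense

variable {α : Type*} [Fintype α] [DecidableEq α] {R : α → α → Prop} [DecidableRel R]

variable (R) in
lemma card_compl_add_le_card_connectors (S : Finset α) (a b : α) :
    #Sᶜ + #{c ∈ S | ¬R a c} + #{c ∈ S | ¬R c b} ≤
      #(connectors R Sᶜ a b) + #{c | ¬R a c} + #{c | ¬R c b} := by
  have hsplit : ∀ p : α → Prop, [DecidablePred p] →
      #{c | p c} = #{c ∈ S | p c} + #{c ∈ Sᶜ | p c} := fun p _ => by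
    simp only [card_filter]; rw [sum_add_sum_compl]
  have hcover : Sᶜ ⊆ connectors R Sᶜ a b ∪ ({c ∈ Sᶜ | ¬R a c} ∪ {c ∈ Sᶜ | ¬R c b}) := by
    intro w hw
    simp only [connectors, mem_union, mem_filter]
    tauto
  have := card_le_card hcover
  have := card_union_le (connectors R Sᶜ a b) ({c ∈ Sᶜ | ¬R a c} ∪ {c ∈ Sᶜ | ¬R c b})
  have := card_union_le {c ∈ Sᶜ | ¬R a c} {c ∈ Sᶜ | ¬R c b}
  have := hsplit (¬R a ·)
  have := hsplit (¬R · b)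
  omega

theorem exists_isMutualMatching_card_add_le_card_connectors (S : Finset α)
    (hdense : ∀ a ∈ S, 4 * #{c | ¬R a c} + 1 ≤ Fintype.card α ∧
      4 * #{c | ¬R c a} + 1 ≤ Fintype.card α) :
    ∃ M, IsMutualMatching R S M ∧ ∀ a ∈ S \ M.biUnion id, ∀ b ∈ S \ M.biUnion id, a ≠ b →
      #(S \ M.biUnion id) + #{c ∈ S | ¬R a c ∧ ¬R c a} + #{c ∈ S | ¬R b c ∧ ¬R c b} ≤
        #(connectors R Sᶜ a b) + 1 := by
  obtain ⟨M, hM, hmax⟩ := exists_isMutualMatching_forall_card_le R S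
  refine ⟨M, hM, fun a ha b hb hab => ?_⟩
  obtain ⟨haS, haM⟩ := mem_sdiff.1 ha
  obtain ⟨hbS, hbM⟩ := mem_sdiff.1 hb
  have := card_add_card_filter_le_card_mutualNbrs R S a
  have := card_add_card_filter_le_card_mutualNbrs R S b
  have := card_mutualNbrs_add_card_mutualNbrs_le hM hmax hab haS hbS haM hbM
  have := card_compl_add_le_card_connectors R S a b
  have := card_compl S
  have := card_le_card hM.biUnion_subset
  rw [hM.card_biUnion] at this
  rw [card_sdiff_of_subset hM.biUnion_subset, hM.card_biUnion]
  have := card_le_univ S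
  have := hdense a haS
  have := hdense b hbS
  have : #{c ∈ S | ¬R c a} ≤ #{c | ¬R c a} := card_le_card (filter_subset_filter _ (subset_univ S))
  have : #{c ∈ S | ¬R b c} ≤ #{c | ¬R b c} := card_le_card (filter_subset_filter _ (subset_univ S))
  omega

theorem exists_disjoint_isDirCycles_of_dense (S : Finset α)
    (hdense : ∀ a ∈ S, 4 * #{c | ¬R a c} + 1 ≤ Fintype.card α ∧
      4 * #{c | ¬R c a} + 1 ≤ Fintype.card α) :
    ∃ L : List (List α), L.length = #S / 2 ∧ L.Pairwise List.Disjoint ∧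
      ∀ l ∈ L, IsDirCycle R l ∧ #(l.toFinset ∩ S) = 2 := by
  obtain ⟨M, hM, hbound⟩ := exists_isMutualMatching_card_add_le_card_connectors S hdense
  set U := S \ M.biUnion id
  have hUS : U ⊆ S := sdiff_subset
  have hU : #U + 2 * #M = #S := by
    have := card_le_card hM.biUnion_subset
    rw [card_sdiff_of_subset hM.biUnion_subset, hM.card_biUnion] at *
    omega
  obtain ⟨L₁, hlen₁, hpw₁, hL₁⟩ := hM.exists_isDirCycles
  obtain ⟨L₂, hlen₂, hpw₂, hL₂⟩ := exists_isCyclePacking_of_connectors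
    (R := R) (U := U) (F := Sᶜ) (disjoint_compl_right.mono_left hUS)
    (fun a ha b hb hab => by have := hbound a ha b hb hab; omega)
    (fun a ha b hb hab h h' => by
      have := hbound a ha b hb hab
      have : 0 < #{c ∈ S | ¬R a c ∧ ¬R c a} := card_pos.2 ⟨b, mem_filter.2 ⟨hUS hb, h, h'⟩⟩
      have : 0 < #{c ∈ S | ¬R b c ∧ ¬R c b} := card_pos.2 ⟨a, mem_filter.2 ⟨hUS ha, h', h⟩⟩
      omega)
  refine ⟨L₁ ++ L₂, by simp only [List.length_append]; omega,
    List.pairwise_append.2 ⟨hpw₁, hpw₂, fun l₁ h₁ l₂ h₂ => ?_⟩, fun l hl => ?_⟩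
  · rw [← List.disjoint_toFinset_iff_disjoint]
    refine disjoint_of_subset_left (subset_biUnion_of_mem id (hL₁ l₁ h₁).2)
      (disjoint_of_subset_right (hL₂ l₂ h₂).2.1 ?_)
    exact disjoint_union_right.2 ⟨disjoint_sdiff, disjoint_compl_right.mono_left hM.biUnion_subset⟩
  rcases List.mem_append.1 hl with hl | hl
  · obtain ⟨hcyc, he⟩ := hL₁ l hl
    exact ⟨hcyc, by rw [inter_eq_left.2 (hM.subset _ he), hM.card_eq_two _ he]⟩
  · obtain ⟨hcyc, hsub, hcard⟩ := hL₂ l hl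
    exact ⟨hcyc, by rwa [inter_eq_inter_of_subset_union hsub hUS disjoint_compl_right]⟩

end Dense

section Bipartite

variable {α : Type*} [Fintype α] (G : SimpleGraph (α ⊕ α)) [DecidableRel G.Adj]

lemma ncard_neighborSet_inr (hY : ∀ i j : α, ¬G.Adj (Sum.inr i) (Sum.inr j)) (a : α) :
    (G.neighborSet (Sum.inr a)).ncard = #{c | G.Adj (Sum.inr a) (Sum.inl c)} := by
  have : G.neighborSet (Sum.inr a) =
      Sum.inl '' ↑({c | G.Adj (Sum.inr a) (Sum.inl c)} : Finset α) := by
    ext (c | c) <;> simp [hY]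
  rw [this, Set.ncard_image_of_injective _ Sum.inl_injective, Set.ncard_coe_finset]

lemma ncard_neighborSet_inl (hX : ∀ i j : α, ¬G.Adj (Sum.inl i) (Sum.inl j)) (a : α) :
    (G.neighborSet (Sum.inl a)).ncard = #{c | G.Adj (Sum.inr c) (Sum.inl a)} := by
  have : G.neighborSet (Sum.inl a) =
      Sum.inr '' ↑({c | G.Adj (Sum.inr c) (Sum.inl a)} : Finset α) := by
    ext (c | c) <;> simp [hX, G.adj_comm]
  rw [this, Set.ncard_image_of_injective _ Sum.inr_injective, Set.ncard_coe_finset]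

end Bipartite

lemma four_mul_card_filter_not_add_one_le {α : Type*} [Fintype α] (p : α → Prop) [DecidablePred p]
    (h : (3 * (Fintype.card α : ℚ) + 1) / 4 ≤ (#{c | p c} : ℚ)) :
    4 * #{c | ¬p c} + 1 ≤ Fintype.card α := by
  have hsum := card_filter_add_card_filter_not (s := univ) fun c => p c
  rw [card_univ] at hsum
  have : ((3 * Fintype.card α + 1 : ℕ) : ℚ) ≤ ((4 * #{c | p c} : ℕ) : ℚ) := by
    push_cast; linarith
  have := Nat.cast_le.1 this
  omega

theorem stmt10_general (n : ℕ) (G : SimpleGraph (Fin n ⊕ Fin n))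
    (hX : ∀ i j : Fin n, ¬ G.Adj (Sum.inl i) (Sum.inl j))
    (hY : ∀ i j : Fin n, ¬ G.Adj (Sum.inr i) (Sum.inr j))
    (S : Finset (Fin n))
    (hdeg : ∀ i ∈ S,
      (3 * (n : ℚ) + 1) / 4 ≤ ((G.neighborSet (Sum.inl i)).ncard : ℚ) ∧
      (3 * (n : ℚ) + 1) / 4 ≤ ((G.neighborSet (Sum.inr i)).ncard : ℚ)) :
    ∃ c : Fin (S.card / 2) → List (Fin n),
      (∀ i, AltCycle G (c i)) ∧
      (∀ i j, i ≠ j → ∀ a ∈ c i, a ∉ c j) ∧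
      (∀ i, ((c i).toFinset ∩ S).card = 2) := by
  classical
  have hdense : ∀ a ∈ S, 4 * #{c | ¬G.Adj (Sum.inr a) (Sum.inl c)} + 1 ≤ Fintype.card (Fin n) ∧
      4 * #{c | ¬G.Adj (Sum.inr c) (Sum.inl a)} + 1 ≤ Fintype.card (Fin n) := fun a ha => by
    refine ⟨four_mul_card_filter_not_add_one_le _ ?_, four_mul_card_filter_not_add_one_le _ ?_⟩
    · rw [← ncard_neighborSet_inr G hY, Fintype.card_fin]; exact (hdeg a ha).2
    · rw [← ncard_neighborSet_inl G hX, Fintype.card_fin]; exact (hdeg a ha).1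
  obtain ⟨L, hlen, hpw, hL⟩ := exists_disjoint_isDirCycles_of_dense
    (R := fun i j => G.Adj (Sum.inr i) (Sum.inl j)) S hdense
  refine ⟨fun i => L.get (i.cast hlen.symm), fun i => (hL _ (L.get_mem _)).1, fun i j hij => ?_,
    fun i => (hL _ (L.get_mem _)).2⟩
  rcases lt_or_gt_of_ne hij with h | h
  · exact fun a ha hb => hpw.rel_get_of_lt (by simpa using h) ha hb
  · exact fun a ha hb => hpw.rel_get_of_lt (by simpa using h) hb ha

/-- **Claim 3.** If every endpoint of an edge of `M₀` (indexed by `S`) has degree at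
least `(3n+1)/4` in the balanced bipartite graph `G` with perfect matching
`M = {xᵢyᵢ}`, then `G` contains `⌊|M₀|/2⌋` pairwise vertex-disjoint feasible cycles,
each containing exactly two edges of `M₀`. -/
theorem stmt10 (n : ℕ) (G : SimpleGraph (Fin n ⊕ Fin n))
    (hX : ∀ i j : Fin n, ¬ G.Adj (Sum.inl i) (Sum.inl j))
    (hY : ∀ i j : Fin n, ¬ G.Adj (Sum.inr i) (Sum.inr j))
    (hM : ∀ i : Fin n, G.Adj (Sum.inl i) (Sum.inr i))
    (S : Finset (Fin n))
    (hdeg : ∀ i ∈ S,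
      (3 * (n : ℚ) + 1) / 4 ≤ ((G.neighborSet (Sum.inl i)).ncard : ℚ) ∧
      (3 * (n : ℚ) + 1) / 4 ≤ ((G.neighborSet (Sum.inr i)).ncard : ℚ)) :
    ∃ c : Fin (S.card / 2) → List (Fin n),
      (∀ i, AltCycle G (c i)) ∧
      (∀ i j, i ≠ j → ∀ a ∈ c i, a ∉ c j) ∧
      (∀ i, ((c i).toFinset ∩ S).card = 2) :=
  stmt10_general n G hX hY S hdeg
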